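/- arXiv:1907.01133 — 2 statements merged into one kernel-verified Lean document; each statement's English description precedes it below -/
import Mathlib

section
/- Let I be a network coding instance that is (ε, R, n)-feasible with a corresponding network code, and let e* be an edge of I with capacity R_{e*}. Suppose there exists a subset 𝒳'_S ⊆ 𝒳_S of the form 𝒳'_S = ∏_{i∈S} 𝒳'_i with 𝒳'_i ⊆ 𝒳_i such that: (1) the edge message X_{e*} is constant conditioned on X_S ∈ 𝒳'_S (i.e., the global encoding function of e* takes a single value on 𝒳'_S); (2) |𝒳'_i| ≥ |𝒳_i| / |𝒳_{e*}| for every i ∈ S; and (3) |𝒳'_S ∩ 𝒳_S^G| ≥ (1 − ε)·|𝒳'_S|. Then the instance I' obtained from I by removing edge e* is (ε, R − R_{e*}·1, n)-feasible, where (R − R_{e*}·1)_i = max(0, R_i − R_{e*}). -/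
/-!
Restrict every source `i` to `𝒳'_i`. On `𝒳'_S` the edge `e*` carries a constant, so the code
still works after `e*` is deleted, once the terminals substitute that constant for the missing
message. The new source alphabets are large enough because
`|𝒳'_i| ≥ |𝒳_i| / |𝒳_{e*}| ≥ 2^{nR_i} / 2^{nR_{e*}}` and `|𝒳'_i| ≥ 1`, and the restricted
messages that are decoded wrongly lie in `𝒳'_S \ 𝒳_S^G`, which has at most `ε |𝒳'_S|` elements.
-/

open scoped Classical
open Finset

noncomputable section

/-- A network coding instance `I = (N, S, T, M)`: a finite directed acyclic graph with
edge capacities, source nodes (no incoming edges), terminal nodes (no outgoing edges),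
and a demand relation (`demands s t` means terminal `t` demands source `s`). -/
structure NetworkInstance where
  V : Type
  [fintypeV : Fintype V]
  [decEqV : DecidableEq V]
  E : Finset (V × V)
  cap : V × V → ℝ
  cap_pos : ∀ e ∈ E, 0 < cap e
  S : Finset V
  T : Finset V
  demands : V → V → Prop
  src_no_in : ∀ s ∈ S, ∀ e ∈ E, e.2 ≠ s
  ter_no_out : ∀ t ∈ T, ∀ e ∈ E, e.1 ≠ t
  disjointST : Disjoint S T
  acyclic : ∃ ord : V → ℕ, ∀ e ∈ E, ord e.1 < ord e.2

attribute [instance] NetworkInstance.fintypeV NetworkInstance.decEqV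

/-- A network code of blocklength `n` and rate vector `R` on the instance `I`.
Sources are independent and uniform on their (finite, nonempty) alphabets, which is modelled
by taking the whole product of the source alphabets as the (uniform) sample space.
`ge e` is the global encoding function of edge `e` (a function of the source message vector),
`dec t` the decoding function of terminal `t` (a function of the messages on incoming edges
of `t`, producing reconstructions of the demanded sources).
`local_enc` states that the message on an edge `e = (u,v)` is determined by the messages on
the incoming edges of `u` (together with the source message at `u`, when `u` is a source).
`rate` states `H(X_i) = log₂|𝒳_i| ≥ n·R_i`, and `capBound` states `log₂|𝒳_e| ≤ n·R_e`. -/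
structure NetworkCode (I : NetworkInstance) (R : I.V → ℝ) (n : ℕ) where
  srcA : I.V → Type
  edgeA : I.V × I.V → Type
  [finSrc : ∀ v, Fintype (srcA v)]
  [finEdge : ∀ e, Fintype (edgeA e)]
  [neSrc : ∀ v, Nonempty (srcA v)]
  [neEdge : ∀ e, Nonempty (edgeA e)]
  ge : (e : I.V × I.V) → ((s : {v // v ∈ I.S}) → srcA s.1) → edgeA e
  dec : (t : {v // v ∈ I.T}) →
    ((f : {e : I.V × I.V // e ∈ I.E ∧ e.2 = t.1}) → edgeA f.1) →
    ((s : {v // v ∈ I.S ∧ I.demands v t.1}) → srcA s.1)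
  local_enc : ∀ e ∈ I.E, ∀ x y : ((s : {v // v ∈ I.S}) → srcA s.1),
    (∀ s : {v // v ∈ I.S}, (s : I.V) = e.1 → x s = y s) →
    (∀ f ∈ I.E, f.2 = e.1 → ge f x = ge f y) →
    ge e x = ge e y
  rate : ∀ v ∈ I.S, (2 : ℝ) ^ ((n : ℝ) * R v) ≤ Fintype.card (srcA v)
  capBound : ∀ e ∈ I.E, (Fintype.card (edgeA e) : ℝ) ≤ (2 : ℝ) ^ ((n : ℝ) * I.cap e)

attribute [instance] NetworkCode.finSrc NetworkCode.finEdge NetworkCode.neSrc NetworkCode.neEdge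

/-- The source message vector space `𝒳_S = ∏ 𝒳_i`; the sources being independent and
uniform, the probability space is the uniform distribution on `Msg`. -/
abbrev NetworkCode.Msg {I : NetworkInstance} {R : I.V → ℝ} {n : ℕ} (C : NetworkCode I R n) : Type :=
  (s : {v // v ∈ I.S}) → C.srcA s.1

/-- Terminal `t` decodes the source vector `x` correctly. -/
def NetworkCode.Correct {I : NetworkInstance} {R : I.V → ℝ} {n : ℕ} (C : NetworkCode I R n)
    (t : {v // v ∈ I.T}) (x : C.Msg) : Prop :=
  C.dec t (fun f => C.ge f.1 x) = fun s : {v : I.V // v ∈ I.S ∧ I.demands v t.1} => x ⟨s.1, s.2.1⟩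

/-- `x` is "good": every terminal decodes it correctly. -/
def NetworkCode.Good {I : NetworkInstance} {R : I.V → ℝ} {n : ℕ} (C : NetworkCode I R n)
    (x : C.Msg) : Prop := ∀ t, C.Correct t x

/-- The code has decoding error probability at most `ε` at every terminal
(w.r.t. the uniform distribution on source messages). -/
def NetworkCode.Achieves {I : NetworkInstance} {R : I.V → ℝ} {n : ℕ} (C : NetworkCode I R n)
    (ε : ℝ) : Prop :=
  ∀ t : {v // v ∈ I.T},
    ((Finset.univ.filter fun x : C.Msg => ¬ C.Correct t x).card : ℝ) ≤ ε * Fintype.card C.Msg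

/-- `I` is `(ε, R, n)`-feasible. -/
def Feasible (I : NetworkInstance) (ε : ℝ) (R : I.V → ℝ) (n : ℕ) : Prop :=
  ∃ C : NetworkCode I R n, C.Achieves ε

/-- The instance `I'` obtained from `I` by removing the edge `e`. -/
def NetworkInstance.removeEdge (I : NetworkInstance) (e : I.V × I.V) : NetworkInstance where
  V := I.V
  fintypeV := I.fintypeV
  decEqV := I.decEqV
  E := I.E.erase e
  cap := I.cap
  cap_pos := fun f hf => I.cap_pos f (Finset.mem_of_mem_erase hf)
  S := I.S
  T := I.T
  demands := I.demands
  src_no_in := fun s hs f hf => I.src_no_in s hs f (Finset.mem_of_mem_erase hf)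
  ter_no_out := fun t ht f hf => I.ter_no_out t ht f (Finset.mem_of_mem_erase hf)
  disjointST := I.disjointST
  acyclic := ⟨I.acyclic.choose, fun f hf => I.acyclic.choose_spec f (Finset.mem_of_mem_erase hf)⟩

/-- The reduced rate vector `R - R_{e*}·1`, i.e. `i ↦ max 0 (R_i - R_{e*})`. -/
def reducedRate (I : NetworkInstance) (R : I.V → ℝ) (e : I.V × I.V) : I.V → ℝ :=
  fun v => max 0 (R v - I.cap e)

theorem rpow_mul_max_sub_le {b t x y X Y k : ℝ} (hb : 0 < b)
    (hX : b ^ (t * x) ≤ X) (hY : Y ≤ b ^ (t * y)) (hY0 : 0 < Y) (hk : X / Y ≤ k) (hk1 : 1 ≤ k) :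
    b ^ (t * max 0 (x - y)) ≤ k := by
  rcases le_total (x - y) 0 with hxy | hxy
  · rwa [max_eq_left hxy, mul_zero, Real.rpow_zero]
  · calc b ^ (t * max 0 (x - y)) = b ^ (t * x) / b ^ (t * y) := by
          rw [max_eq_right hxy, mul_sub, Real.rpow_sub hb]
      _ ≤ X / Y := div_le_div₀ ((Real.rpow_pos_of_pos hb _).le.trans hX) hX hY0 hY
      _ ≤ k := hk

theorem Finset.nonempty_of_rpow_le_card {α : Type*} {b r : ℝ} {s : Finset α} (hb : 0 < b)
    (h : b ^ r ≤ s.card) : s.Nonempty :=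
  card_pos.mp (by exact_mod_cast (Real.rpow_pos_of_pos hb r).trans_le h)

namespace NetworkCode

variable {I : NetworkInstance} {R : I.V → ℝ} {n : ℕ} (C : NetworkCode I R n)
  (A : (s : {v // v ∈ I.S}) → Finset (C.srcA s.1))

/-- The alphabet `𝒳'_v` at a vertex `v`; it is all of `𝒳_v` when `v` is not a source. -/
def RestrictedSrc (v : I.V) : Type :=
  {a : C.srcA v // ∀ h : v ∈ I.S, a ∈ A ⟨v, h⟩}

instance fintypeRestrictedSrc (v : I.V) : Fintype (C.RestrictedSrc A v) :=
  inferInstanceAs (Fintype {a : C.srcA v // ∀ h : v ∈ I.S, a ∈ A ⟨v, h⟩})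

theorem card_restrictedSrc {v : I.V} (hv : v ∈ I.S) :
    Fintype.card (C.RestrictedSrc A v) = (A ⟨v, hv⟩).card := by
  rw [← Fintype.card_coe]
  exact Fintype.card_congr
    { toFun := fun a => ⟨a.1, a.2 hv⟩
      invFun := fun a => ⟨a.1, fun _ => a.2⟩ }

theorem nonempty_restrictedSrc (hA : ∀ s, (A s).Nonempty) (v : I.V) :
    Nonempty (C.RestrictedSrc A v) := by
  by_cases hv : v ∈ I.S
  · obtain ⟨a, ha⟩ := hA ⟨v, hv⟩
    exact ⟨⟨a, fun _ => ha⟩⟩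
  · exact ⟨⟨Classical.arbitrary _, fun h => absurd h hv⟩⟩

def RestrictedSrc.clamp (hA : ∀ s, (A s).Nonempty) {v : I.V} (a : C.srcA v) :
    C.RestrictedSrc A v :=
  if h : ∀ hv : v ∈ I.S, a ∈ A ⟨v, hv⟩ then ⟨a, h⟩
  else Classical.choice (C.nonempty_restrictedSrc A hA v)

theorem RestrictedSrc.clamp_val (hA : ∀ s, (A s).Nonempty) {v : I.V} (a : C.RestrictedSrc A v) :
    clamp C A hA a.1 = a := by
  exact dif_pos a.2

variable {C A}

def embedMsg (x : (s : {v // v ∈ I.S}) → C.RestrictedSrc A s.1) : C.Msg :=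
  fun s => (x s).1

theorem embedMsg_mem (x : (s : {v // v ∈ I.S}) → C.RestrictedSrc A s.1) (s : {v // v ∈ I.S}) :
    embedMsg x s ∈ A s :=
  (x s).2 s.2

theorem embedMsg_injective : Function.Injective (embedMsg (C := C) (A := A)) :=
  fun _ _ h => funext fun s => Subtype.ext (congrFun h s)

theorem card_restrictedMsg :
    Fintype.card ((s : {v // v ∈ I.S}) → C.RestrictedSrc A s.1) =
      (univ.filter fun x : C.Msg => ∀ s, x s ∈ A s).card := by
  rw [← Fintype.card_subtype]
  exact Fintype.card_congr
    { toFun := fun x => ⟨embedMsg x, embedMsg_mem x⟩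
      invFun := fun x s => ⟨x.1 s, fun _ => x.2 s⟩ }

variable (C) in
def insertEdgeMsg (estar : I.V × I.V) (c : C.edgeA estar) (t : {v // v ∈ I.T})
    (y : (f : {e : I.V × I.V // e ∈ I.E.erase estar ∧ e.2 = t.1}) → C.edgeA f.1)
    (g : {e : I.V × I.V // e ∈ I.E ∧ e.2 = t.1}) : C.edgeA g.1 :=
  if h : g.1 = estar then h.symm ▸ c
  else y ⟨g.1, Finset.mem_erase.mpr ⟨h, g.2.1⟩, g.2.2⟩

theorem insertEdgeMsg_ge {estar : I.V × I.V} {x : C.Msg} (t : {v // v ∈ I.T}) :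
    C.insertEdgeMsg estar (C.ge estar x) t (fun f => C.ge f.1 x) =
      fun g : {e : I.V × I.V // e ∈ I.E ∧ e.2 = t.1} => C.ge g.1 x := by
  funext ⟨g, hg⟩
  by_cases h : g = estar
  · subst h
    simp [insertEdgeMsg]
  · simp [insertEdgeMsg, h]

theorem nonempty_of_two_rpow_le_card {R' : I.V → ℝ}
    (hrate : ∀ v (hv : v ∈ I.S), (2 : ℝ) ^ ((n : ℝ) * R' v) ≤ (A ⟨v, hv⟩).card)
    (s : {v // v ∈ I.S}) : (A s).Nonempty :=
  Finset.nonempty_of_rpow_le_card two_pos (hrate s.1 s.2)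

/-- Since `e*` carries the constant `c` on `𝒳'_S`, terminals can decode as in `C` with `c` in
place of the message on `e*`. -/
def restrict (C : NetworkCode I R n) {A : (s : {v // v ∈ I.S}) → Finset (C.srcA s.1)}
    (estar : I.V × I.V) (c : C.edgeA estar) (hc : ∀ x : C.Msg, (∀ s, x s ∈ A s) → C.ge estar x = c)
    (R' : I.V → ℝ) (hrate : ∀ v (hv : v ∈ I.S), (2 : ℝ) ^ ((n : ℝ) * R' v) ≤ (A ⟨v, hv⟩).card) :
    NetworkCode (I.removeEdge estar) R' n where
  srcA := C.RestrictedSrc A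
  finSrc := C.fintypeRestrictedSrc A
  finEdge := C.finEdge
  neEdge := C.neEdge
  edgeA := C.edgeA
  neSrc := C.nonempty_restrictedSrc A (nonempty_of_two_rpow_le_card hrate)
  ge e x := C.ge e (embedMsg x)
  dec t y s :=
    RestrictedSrc.clamp C A (nonempty_of_two_rpow_le_card hrate)
      (C.dec t (C.insertEdgeMsg estar c t y) s)
  local_enc e he x y hsrc hedges := by
    refine C.local_enc e (Finset.mem_of_mem_erase he) _ _
      (fun s hs => congrArg Subtype.val (hsrc s hs)) ?_
    intro f hf hfe
    by_cases hf_eq : f = estar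
    · subst hf_eq
      rw [hc _ (embedMsg_mem x), hc _ (embedMsg_mem y)]
    · exact hedges f (Finset.mem_erase.mpr ⟨hf_eq, hf⟩) hfe
  rate v hv := (card_restrictedSrc C A hv).symm ▸ hrate v hv
  capBound e he := C.capBound e (Finset.mem_of_mem_erase he)

variable {estar : I.V × I.V} {c : C.edgeA estar}
  {hc : ∀ x : C.Msg, (∀ s, x s ∈ A s) → C.ge estar x = c}
  {R' : I.V → ℝ} {hrate : ∀ v (hv : v ∈ I.S), (2 : ℝ) ^ ((n : ℝ) * R' v) ≤ (A ⟨v, hv⟩).card}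

theorem restrict_correct (t : {v // v ∈ I.T}) (x : (s : {v // v ∈ I.S}) → C.RestrictedSrc A s.1)
    (hx : C.Correct t (embedMsg x)) : (C.restrict estar c hc R' hrate).Correct t x := by
  have incoming : C.insertEdgeMsg estar c t (fun f => C.ge f.1 (embedMsg x)) =
      fun g : {e : I.V × I.V // e ∈ I.E ∧ e.2 = t.1} => C.ge g.1 (embedMsg x) :=
    hc _ (embedMsg_mem x) ▸ insertEdgeMsg_ge t
  funext s
  change RestrictedSrc.clamp C A (nonempty_of_two_rpow_le_card hrate)
    (C.dec t (C.insertEdgeMsg estar c t fun f => C.ge f.1 (embedMsg x)) ⟨s.1, s.2⟩) = x ⟨s.1, s.2.1⟩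
  rw [incoming, congrFun hx ⟨s.1, s.2⟩]
  exact RestrictedSrc.clamp_val C A _ (x ⟨s.1, s.2.1⟩)

theorem restrict_achieves {ε : ℝ}
    (hgood : (1 - ε) * ((univ.filter fun x : C.Msg => ∀ s, x s ∈ A s).card : ℝ) ≤
      ((univ.filter fun x : C.Msg => (∀ s, x s ∈ A s) ∧ C.Good x).card : ℝ)) :
    (C.restrict estar c hc R' hrate).Achieves ε := by
  intro t
  set P := univ.filter fun x : C.Msg => ∀ s, x s ∈ A s
  set B := univ.filter fun x : C.Msg => (∀ s, x s ∈ A s) ∧ C.Good x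
  have hBP : B ⊆ P := fun x hx => mem_filter.mpr ⟨mem_univ x, (mem_filter.mp hx).2.1⟩
  have few_bad : ((P \ B).card : ℝ) ≤
      ε * Fintype.card ((s : {v // v ∈ I.S}) → C.RestrictedSrc A s.1) := by
    rw [card_restrictedMsg, card_sdiff_of_subset hBP, Nat.cast_sub (card_le_card hBP)]
    linarith
  refine le_trans (Nat.cast_le.mpr (card_le_card_of_injOn (t := P \ B)
    (embedMsg (C := C) (A := A)) (fun (x : (s : {v // v ∈ I.S}) → C.RestrictedSrc A s.1) hx => ?_)
    embedMsg_injective.injOn)) few_bad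
  have hx : ¬ (C.restrict estar c hc R' hrate).Correct t x := (mem_filter.mp hx).2
  refine mem_sdiff.mpr ⟨mem_filter.mpr ⟨mem_univ _, embedMsg_mem x⟩, fun hB => hx ?_⟩
  exact restrict_correct (C := C) t x ((mem_filter.mp hB).2.2 t)

end NetworkCode

theorem local_edge_removal_of_product_subset_general
    (I : NetworkInstance) (ε : ℝ) (R : I.V → ℝ) (n : ℕ)
    (C : NetworkCode I R n)
    (estar : I.V × I.V) (he : estar ∈ I.E)
    (A' : (s : {v // v ∈ I.S}) → Finset (C.srcA s.1))
    (h1 : ∃ c : C.edgeA estar, ∀ x : C.Msg, (∀ s, x s ∈ A' s) → C.ge estar x = c)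
    (h2 : ∀ s : {v // v ∈ I.S},
      (Fintype.card (C.srcA s.1) : ℝ) / (Fintype.card (C.edgeA estar) : ℝ) ≤ ((A' s).card : ℝ))
    (h3 : (1 - ε) * ((Finset.univ.filter fun x : C.Msg => ∀ s, x s ∈ A' s).card : ℝ) ≤
      ((Finset.univ.filter fun x : C.Msg => (∀ s, x s ∈ A' s) ∧ C.Good x).card : ℝ)) :
    Feasible (I.removeEdge estar) ε (reducedRate I R estar) n := by
  obtain ⟨c, hc⟩ := h1
  have hedge : (0 : ℝ) < Fintype.card (C.edgeA estar) := by exact_mod_cast Fintype.card_pos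
  have hrate : ∀ v (hv : v ∈ I.S),
      (2 : ℝ) ^ ((n : ℝ) * reducedRate I R estar v) ≤ (A' ⟨v, hv⟩).card := by
    intro v hv
    have hA_pos : (0 : ℝ) < (A' ⟨v, hv⟩).card :=
      (div_pos (by exact_mod_cast Fintype.card_pos) hedge).trans_le (h2 ⟨v, hv⟩)
    exact rpow_mul_max_sub_le two_pos (C.rate v hv) (C.capBound estar he) hedge (h2 ⟨v, hv⟩)
      (by exact_mod_cast hA_pos)
  exact ⟨C.restrict estar c hc _ hrate, NetworkCode.restrict_achieves h3⟩

/-- **Corollary 1.** If `I` is `(ε,R,n)`-feasible with code `C`, and there is a product subset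
`𝒳'_S = ∏_i 𝒳'_i ⊆ 𝒳_S` on which (1) the message on `e*` is constant, (2) each factor satisfies
`|𝒳'_i| ≥ |𝒳_i|/|𝒳_{e*}|`, and (3) `|𝒳'_S ∩ 𝒳_S^G| ≥ (1-ε)|𝒳'_S|`, then removing `e*` leaves
the instance `(ε, R - R_{e*}·1, n)`-feasible. -/
theorem local_edge_removal_of_product_subset
    (I : NetworkInstance) (ε : ℝ) (R : I.V → ℝ) (n : ℕ)
    (C : NetworkCode I R n) (hfeas : C.Achieves ε)
    (estar : I.V × I.V) (he : estar ∈ I.E)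
    (A' : (s : {v // v ∈ I.S}) → Finset (C.srcA s.1))
    (h1 : ∃ c : C.edgeA estar, ∀ x : C.Msg, (∀ s, x s ∈ A' s) → C.ge estar x = c)
    (h2 : ∀ s : {v // v ∈ I.S},
      (Fintype.card (C.srcA s.1) : ℝ) / (Fintype.card (C.edgeA estar) : ℝ) ≤ ((A' s).card : ℝ))
    (h3 : (1 - ε) * ((Finset.univ.filter fun x : C.Msg => ∀ s, x s ∈ A' s).card : ℝ) ≤
      ((Finset.univ.filter fun x : C.Msg => (∀ s, x s ∈ A' s) ∧ C.Good x).card : ℝ)) :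
    Feasible (I.removeEdge estar) ε (reducedRate I R estar) n :=
  local_edge_removal_of_product_subset_general I ε R n C estar he A' h1 h2 h3
end
end

section
/- Let I be a network coding instance that is (ε, R, n)-feasible with ε < 1/2 via an Abelian group network code {X_f : f ∈ S ∪ E}. Then the edge removal statement holds on I: for every edge e* of I with capacity R_{e*}, the instance I' obtained from I by removing e* is (ε, R − R_{e*}·1, n)-feasible, where (R − R_{e*}·1)_i = max(0, R_i − R_{e*}). -/
open scoped Classical
open Finset

noncomputable section

/-- An Abelian group characterization of a network code: a finite Abelian group `G` with
subgroups `G_f` for every source and every edge, together with a balanced map `lift : G → 𝒳_S`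
(pushing the uniform distribution on `G` to the uniform distribution on source vectors),
such that the value of each source (resp. edge) message is, up to bijective relabeling,
the left coset of `G_f` of the uniform group element; w.l.o.g. `∩_{i∈S} G_i = {1}`. -/
structure AbelianGroupChar {I : NetworkInstance} {R : I.V → ℝ} {n : ℕ}
    (C : NetworkCode I R n) where
  G : Type
  [grp : CommGroup G]
  [fin : Fintype G]
  Gs : {v // v ∈ I.S} → Subgroup G
  Ge : {e : I.V × I.V // e ∈ I.E} → Subgroup G
  lift : G → C.Msg
  balanced : ∀ x : C.Msg,
    (Finset.univ.filter fun g : G => lift g = x).card * Fintype.card C.Msg = Fintype.card G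
  src_char : ∀ s : {v // v ∈ I.S}, ∀ g g' : G,
    g⁻¹ * g' ∈ Gs s ↔ lift g s = lift g' s
  edge_char : ∀ e : {e : I.V × I.V // e ∈ I.E}, ∀ g g' : G,
    g⁻¹ * g' ∈ Ge e ↔ C.ge e.1 (lift g) = C.ge e.1 (lift g')
  triv_inter : (⨅ s : {v // v ∈ I.S}, Gs s) = ⊥

/-!
The group `G` characterizing the code is in bijection with the source messages, and translating
by an element `d` that lies in the subgroups of all edges entering a terminal `t` does not change
what `t` observes. If such a `d` moved a source demanded by `t`, translation by `d` would map the
correctly decoded messages injectively into the wrongly decoded ones, so the error probability at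
`t` would be at least `1/2`. Hence for `ε < 1/2` every such `d` fixes the demanded sources.

To remove the edge `e*`, restrict source `i` to `K_i = G_{e*} ∩ ⋂_{j ≠ i} G_j` and send `(k_i)_i`
to the group element `∏ k_i`. Edge `e*` then carries a constant message and can be dropped, and
by the translation argument every terminal still recovers its demanded `k_i`, now without error.
Finally `|𝒳_i| ≤ |⋂_{j ≠ i} G_j| ≤ |K_i| · |𝒳_{e*}|`, which yields the rate `R_i - R_{e*}`.
-/

attribute [instance] AbelianGroupChar.grp AbelianGroupChar.fin

section CommGroup

variable {G ι : Type*} [CommGroup G] [Fintype ι] [DecidableEq ι]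

theorem inv_mul_prod_mem {H : Subgroup G} {x : ι → G} {i : ι} (hx : ∀ j ≠ i, x j ∈ H) :
    (x i)⁻¹ * ∏ j, x j ∈ H := by
  rw [← Finset.mul_prod_erase _ _ (Finset.mem_univ i), inv_mul_cancel_left]
  exact Subgroup.prod_mem _ fun j hj => hx j (Finset.ne_of_mem_erase hj)

theorem inv_prod_mul_prod_mem_iff {H : ι → Subgroup G} (hH : ⨅ i, H i = ⊥) {x y : ι → G}
    (hx : ∀ i j, j ≠ i → x j ∈ H i) (hy : ∀ i j, j ≠ i → y j ∈ H i) (i : ι) :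
    (∏ j, x j)⁻¹ * ∏ j, y j ∈ H i ↔ x i = y i := by
  have hxi := inv_mul_prod_mem (hx i)
  have hyi := inv_mul_prod_mem (hy i)
  constructor
  · intro h
    rw [← inv_mul_eq_one, ← Subgroup.mem_bot, ← hH, Subgroup.mem_iInf]
    intro j
    rcases eq_or_ne j i with rfl | hji
    · have hsplit : (x j)⁻¹ * y j
          = ((x j)⁻¹ * ∏ k, x k) * ((∏ k, x k)⁻¹ * ∏ k, y k) * ((y j)⁻¹ * ∏ k, y k)⁻¹ := by
        group
      rw [hsplit]
      exact mul_mem (mul_mem hxi h) (inv_mem hyi)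
    · exact mul_mem (inv_mem (hx j i hji.symm)) (hy j i hji.symm)
  · intro h
    have hsplit : (∏ j, x j)⁻¹ * ∏ j, y j = ((x i)⁻¹ * ∏ j, x j)⁻¹ * ((y i)⁻¹ * ∏ j, y j) := by
      rw [h]; group
    rw [hsplit]
    exact mul_mem (inv_mem hxi) hyi

end CommGroup

theorem card_le_two_mul_card_filter_not {G : Type*} [Group G] [Fintype G] (p : G → Prop)
    [DecidablePred p] (d : G) (h : ∀ g, p g → ¬ p (g * d)) :
    Fintype.card G ≤ 2 * #{g | ¬ p g} := by
  have hle : #{g | p g} ≤ #{g | ¬ p g} :=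
    Finset.card_le_card_of_injOn (· * d) (fun g hg => by simp_all)
      (fun _ _ _ _ => mul_right_cancel)
  have hsum : #{g | p g} + #{g | ¬ p g} = Fintype.card G := by
    rw [Finset.card_filter_add_card_filter_not, card_univ]
  omega

theorem Subgroup.card_le_card_inf_mul_card {G β : Type*} [Group G] [Finite G] [Fintype β]
    (P K : Subgroup G) (f : G → β) (hf : ∀ g g', f g = f g' → g⁻¹ * g' ∈ K) :
    Nat.card P ≤ Nat.card ↥(K ⊓ P) * Fintype.card β := by
  let r : β → P := Function.invFun fun p : P => f p
  have hr : ∀ p : P, f (r (f p)) = f p := fun p =>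
    Function.invFun_eq (f := fun p : P => f p) ⟨p, rfl⟩
  have hmem : ∀ p : P, (r (f p) : G)⁻¹ * p ∈ K ⊓ P := fun p =>
    ⟨hf _ _ (hr p), P.mul_mem (P.inv_mem (r _).2) p.2⟩
  rw [← Nat.card_eq_fintype_card, ← Nat.card_prod]
  refine Nat.card_le_card_of_injective (fun p => (⟨_, hmem p⟩, f p)) fun p q hpq => ?_
  simp only [Prod.mk.injEq, Subtype.mk.injEq] at hpq
  rw [hpq.2] at hpq
  exact Subtype.ext (mul_left_cancel hpq.1)

theorem two_rpow_mul_max_sub_le {x r c k : ℝ} (hk : 1 ≤ k) (h : 2 ^ (x * r) ≤ k * 2 ^ (x * c)) :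
    (2 : ℝ) ^ (x * max 0 (r - c)) ≤ k := by
  rcases le_total r c with hrc | hcr
  · rwa [max_eq_left (sub_nonpos.mpr hrc), mul_zero, Real.rpow_zero]
  · rw [max_eq_right (sub_nonneg.mpr hcr), mul_sub, Real.rpow_sub two_pos,
      div_le_iff₀ (by positivity)]
    exact h

namespace NetworkCode

variable {I : NetworkInstance} {R : I.V → ℝ} {n : ℕ} {C : NetworkCode I R n} {ε : ℝ}

theorem Achieves.nonneg (h : C.Achieves ε) (t : {v // v ∈ I.T}) :
    0 ≤ ε :=
  nonneg_of_mul_nonneg_left ((Nat.cast_nonneg _).trans (h t)) (by exact_mod_cast Fintype.card_pos)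

theorem Achieves.two_mul_card_error_lt (h : C.Achieves ε)
    (hε : ε < 1 / 2) (t : {v // v ∈ I.T}) :
    2 * #{x | ¬ C.Correct t x} < Fintype.card C.Msg := by
  have hpos : (0 : ℝ) < Fintype.card C.Msg := by exact_mod_cast Fintype.card_pos
  have hreal : (2 * #{x | ¬ C.Correct t x} : ℝ) < Fintype.card C.Msg := by nlinarith [h t]
  exact_mod_cast hreal

theorem achieves_of_forall_correct (hε : 0 ≤ ε) (h : ∀ t x, C.Correct t x) : C.Achieves ε := by
  intro t
  simp only [h, not_true_eq_false, Finset.filter_false, Finset.card_empty, Nat.cast_zero]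
  exact mul_nonneg hε (Nat.cast_nonneg _)

theorem Correct.apply_eq {t : {v // v ∈ I.T}} {x y : C.Msg}
    (hx : C.Correct t x) (hy : C.Correct t y)
    (hxy : ∀ f : {e // e ∈ I.E ∧ e.2 = t.1}, C.ge f.1 x = C.ge f.1 y)
    (s : {v // v ∈ I.S ∧ I.demands v t.1}) : x ⟨s.1, s.2.1⟩ = y ⟨s.1, s.2.1⟩ := by
  unfold Correct at hx hy
  rw [funext hxy] at hx
  exact congrFun (hx.symm.trans hy) s

end NetworkCode

namespace AbelianGroupChar

variable {I : NetworkInstance} {R : I.V → ℝ} {n : ℕ} {C : NetworkCode I R n}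
  (A : AbelianGroupChar C)

theorem lift_bijective : Function.Bijective A.lift := by
  refine ⟨fun g g' h => ?_, fun x => ?_⟩
  · have hmem : g⁻¹ * g' ∈ ⨅ s, A.Gs s :=
      Subgroup.mem_iInf.mpr fun s => (A.src_char s g g').2 (congrFun h s)
    rwa [A.triv_inter, Subgroup.mem_bot, inv_mul_eq_one] at hmem
  · by_contra! h
    have hb := A.balanced x
    rw [Finset.filter_false_of_mem fun g _ => h g, Finset.card_empty, zero_mul] at hb
    exact Fintype.card_ne_zero hb.symm

theorem mem_Gs_of_forall_mem_Ge (t : {v // v ∈ I.T})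
    (herr : 2 * #{x | ¬ C.Correct t x} < Fintype.card C.Msg) {d : A.G}
    (hd : ∀ f : {e // e ∈ I.E ∧ e.2 = t.1}, d ∈ A.Ge ⟨f.1, f.2.1⟩)
    (s : {v // v ∈ I.S ∧ I.demands v t.1}) : d ∈ A.Gs ⟨s.1, s.2.1⟩ := by
  by_contra hds
  have hflip : ∀ g, C.Correct t (A.lift g) → ¬ C.Correct t (A.lift (g * d)) := by
    intro g hg hgd
    have hobs : ∀ f : {e // e ∈ I.E ∧ e.2 = t.1},
        C.ge f.1 (A.lift g) = C.ge f.1 (A.lift (g * d)) :=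
      fun f => (A.edge_char ⟨f.1, f.2.1⟩ g (g * d)).1 (by simpa using hd f)
    exact hds (by simpa using (A.src_char _ g (g * d)).2 (hg.apply_eq hgd hobs s))
  have hcount := card_le_two_mul_card_filter_not _ d hflip
  rw [Finset.card_bijective A.lift A.lift_bijective (t := {x | ¬ C.Correct t x}) (by simp),
    Fintype.card_of_bijective A.lift_bijective] at hcount
  omega

def othersInf (v : I.V) : Subgroup A.G :=
  ⨅ (j : {v // v ∈ I.S}) (_ : j.1 ≠ v), A.Gs j

/-- `K_v`, the alphabet of source `v` in the code without the edge `e`. -/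
def reducedSrc (e : {e // e ∈ I.E}) (v : I.V) : Subgroup A.G :=
  A.Ge e ⊓ A.othersInf v

variable (e : {e // e ∈ I.E})

abbrev ReducedMsg : Type :=
  (s : {v // v ∈ I.S}) → A.reducedSrc e s.1

def embed (x : A.ReducedMsg e) : A.G :=
  ∏ s, (x s : A.G)

variable {A e}

theorem embed_mem_Ge (x : A.ReducedMsg e) : A.embed e x ∈ A.Ge e :=
  Subgroup.prod_mem _ fun s _ => (x s).2.1

theorem coe_mem_Gs_of_ne (x : A.ReducedMsg e) {i j : {v // v ∈ I.S}} (hji : j ≠ i) :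
    (x j : A.G) ∈ A.Gs i :=
  Subgroup.mem_iInf.mp (Subgroup.mem_iInf.mp (x j).2.2 i) fun h => hji (Subtype.ext h).symm

theorem lift_embed_apply_eq_iff (x y : A.ReducedMsg e) (s : {v // v ∈ I.S}) :
    A.lift (A.embed e x) s = A.lift (A.embed e y) s ↔ x s = y s := by
  rw [← A.src_char, embed, embed, inv_prod_mul_prod_mem_iff A.triv_inter
    (fun _ _ => coe_mem_Gs_of_ne x) (fun _ _ => coe_mem_Gs_of_ne y), Subtype.ext_iff]

theorem card_srcA_le_card_othersInf {v : I.V} (hv : v ∈ I.S) :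
    Nat.card (C.srcA v) ≤ Nat.card (A.othersInf v) := by
  refine Nat.card_le_card_of_surjective (fun p => A.lift (p : A.G) ⟨v, hv⟩) fun a => ?_
  obtain ⟨g, hg⟩ := A.lift_bijective.2 (Function.update (A.lift 1) ⟨v, hv⟩ a)
  refine ⟨⟨g, Subgroup.mem_iInf.mpr fun j => Subgroup.mem_iInf.mpr fun hj => ?_⟩, ?_⟩
  · have hji : j ≠ ⟨v, hv⟩ := fun h => hj (congrArg Subtype.val h)
    simpa using (A.src_char j 1 g).2 (by rw [hg, Function.update_of_ne hji])
  · simp [hg]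

variable (A e)

theorem two_rpow_le_card_reducedSrc {v : I.V} (hv : v ∈ I.S) :
    (2 : ℝ) ^ ((n : ℝ) * reducedRate I R e.1 v) ≤ Nat.card (A.reducedSrc e v) := by
  refine two_rpow_mul_max_sub_le (by exact_mod_cast Nat.one_le_iff_ne_zero.2 Nat.card_pos.ne') ?_
  have hK := (A.othersInf v).card_le_card_inf_mul_card (A.Ge e) (fun g => C.ge e.1 (A.lift g))
    fun g g' => (A.edge_char e g g').2
  have hsrc := C.rate v hv
  rw [← Nat.card_eq_fintype_card] at hsrc
  calc (2 : ℝ) ^ ((n : ℝ) * R v) ≤ Nat.card (C.srcA v) := hsrc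
    _ ≤ Nat.card (A.reducedSrc e v) * Fintype.card (C.edgeA e.1) := by
        exact_mod_cast (card_srcA_le_card_othersInf (A := A) hv).trans hK
    _ ≤ _ := by
        rw [Nat.card_eq_fintype_card]
        exact mul_le_mul_of_nonneg_left (C.capBound e.1 e.2) (Nat.cast_nonneg _)

def observe (t : {v // v ∈ I.T}) (y : A.ReducedMsg e) :
    (f : {f // f ∈ I.E.erase e.1 ∧ f.2 = t.1}) → C.edgeA f.1 :=
  fun f => C.ge f.1 (A.lift (A.embed e y))

def reducedCode : NetworkCode (I.removeEdge e.1) (reducedRate I R e.1) n where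
  srcA v := A.reducedSrc e v
  edgeA := C.edgeA
  finEdge := C.finEdge
  neEdge := C.neEdge
  neSrc _ := One.instNonempty
  ge f x := C.ge f (A.lift (A.embed e x))
  dec t obs s := Function.invFun (A.observe e t) obs ⟨s.1, s.2.1⟩
  local_enc f hf x y hsrc hedge := by
    refine C.local_enc f (Finset.mem_of_mem_erase hf) _ _
      (fun s hs => (lift_embed_apply_eq_iff x y s).2 (hsrc s hs)) fun f' hf' hf'f => ?_
    by_cases hf'e : f' = e.1
    · subst hf'e
      exact (A.edge_char e _ _).1
        (mul_mem (inv_mem (embed_mem_Ge (A := A) x)) (embed_mem_Ge (A := A) y))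
    · exact hedge f' (Finset.mem_erase.mpr ⟨hf'e, hf'⟩) hf'f
  rate v hv := by
    simpa only [Nat.card_eq_fintype_card] using A.two_rpow_le_card_reducedSrc e hv
  capBound f hf := C.capBound f (Finset.mem_of_mem_erase hf)

theorem reducedCode_correct
    (herr : ∀ t, 2 * #{x | ¬ C.Correct t x} < Fintype.card C.Msg) (t : {v // v ∈ I.T})
    (x : A.ReducedMsg e) : (A.reducedCode e).Correct t x := by
  funext s
  set y := Function.invFun (A.observe e t) (A.observe e t x)
  change y ⟨s.1, s.2.1⟩ = x ⟨s.1, s.2.1⟩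
  have hy : A.observe e t y = A.observe e t x := Function.invFun_eq ⟨x, rfl⟩
  refine ((lift_embed_apply_eq_iff x y _).1 ((A.src_char _ _ _).1 ?_)).symm
  refine A.mem_Gs_of_forall_mem_Ge t (herr t) (fun f => ?_) s
  by_cases hfe : f.1 = e.1
  · rw [show (⟨f.1, f.2.1⟩ : {e // e ∈ I.E}) = e from Subtype.ext hfe]
    exact mul_mem (inv_mem (embed_mem_Ge x)) (embed_mem_Ge y)
  · exact (A.edge_char _ _ _).2 (congrFun hy ⟨f.1, Finset.mem_erase.mpr ⟨hfe, f.2.1⟩, f.2.2⟩).symm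

end AbelianGroupChar

/-- **Corollary 2 (edge removal for Abelian group network codes).**
If `I` is `(ε,R,n)`-feasible with `ε < 1/2` via an Abelian group network code, then for every
edge `e*` of `I`, removing `e*` leaves the instance `(ε, R - R_{e*}·1, n)`-feasible. -/
theorem edge_removal_abelian_group_code
    (I : NetworkInstance) (ε : ℝ) (R : I.V → ℝ) (n : ℕ) (hε : ε < 1/2)
    (C : NetworkCode I R n) (hfeas : C.Achieves ε)
    (habelian : Nonempty (AbelianGroupChar C)) :
    ∀ estar ∈ I.E, Feasible (I.removeEdge estar) ε (reducedRate I R estar) n := by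
  intro estar he
  obtain ⟨A⟩ := habelian
  refine ⟨A.reducedCode ⟨estar, he⟩, fun t => ?_⟩
  exact NetworkCode.achieves_of_forall_correct (hfeas.nonneg t)
    (A.reducedCode_correct ⟨estar, he⟩ (hfeas.two_mul_card_error_lt hε)) t

end
end
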